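/- Let p, v, x, y be real numbers with p > 1, v > 1, x ≥ 0 and y > 0, and set T = y · v^(1/(1−p)) · (1 − v^(p/(1−p)))^(−1/p) (real powers). Then: (a) if x ≤ T, then for every b ∈ [0, x] one has (x^p + y^p)^(1/p) ≤ b/v + ((x−b)^p + y^p)^(1/p); and (b) if x ≥ T, then (x − T)/v + (T^p + y^p)^(1/p) ≤ (x^p + y^p)^(1/p). -/

import Mathlib

/-!
The direct travel time `a ↦ ‖(a, y)‖_p` is convex, and its supporting line at `a` has slope
`(a / ‖(a, y)‖_p)^(p-1)`, the first coordinate of the ℓ^q-unit vector dual to `(a, y)` (equality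
case of Hölder's inequality). This slope increases with `a` and equals `1 / v` exactly at
`a = y · tan α`. So for `x ≤ y · tan α`, shortening the off-highway leg by `b` saves at most
`b / v`, which is what the highway costs; for `x ≥ y · tan α`, the supporting line at `y · tan α`
shows that covering the extra `x - y · tan α` on the highway is no slower than going direct.
-/

open Real

noncomputable def lpNormPair (p a b : ℝ) : ℝ := (a ^ p + b ^ p) ^ (1 / p)

/-- `(dualCoord p a b, dualCoord p b a)` is the ℓ^q-unit vector dual to `(a, b)`. -/
noncomputable def dualCoord (p a b : ℝ) : ℝ := (a / lpNormPair p a b) ^ (p - 1)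

/-- The offset `y · tan α(p, v)` of the highway entry point. -/
noncomputable def incidenceOffset (p v y : ℝ) : ℝ :=
  y * v ^ (1 / (1 - p)) * (1 - v ^ (p / (1 - p))) ^ (-1 / p)

section lpNormPair

variable {p q a a' b : ℝ}

lemma lpNormPair_pos (ha : 0 ≤ a) (hb : 0 < b) : 0 < lpNormPair p a b := by
  unfold lpNormPair; positivity

lemma lpNormPair_rpow (hp : p ≠ 0) (ha : 0 ≤ a) (hb : 0 ≤ b) :
    lpNormPair p a b ^ p = a ^ p + b ^ p := by
  rw [lpNormPair, one_div, rpow_inv_rpow (by positivity) hp]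

lemma rpow_div_lpNormPair (hp : p ≠ 0) (ha : 0 ≤ a) (hb : 0 < b) {c : ℝ} (hc : 0 ≤ c) :
    (c / lpNormPair p a b) ^ p = c ^ p / (a ^ p + b ^ p) := by
  rw [div_rpow hc (lpNormPair_pos ha hb).le, lpNormPair_rpow hp ha hb.le]

lemma mul_add_mul_le_lpNormPair {c d : ℝ} (hpq : p.HolderConjugate q)
    (ha : 0 ≤ a) (hb : 0 ≤ b) (hc : 0 ≤ c) (hd : 0 ≤ d) (hcd : c ^ q + d ^ q = 1) :
    a * c + b * d ≤ lpNormPair p a b := by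
  have h := inner_le_Lp_mul_Lq_of_nonneg Finset.univ hpq (f := ![a, b]) (g := ![c, d])
    (by simp [Fin.forall_fin_two, ha, hb]) (by simp [Fin.forall_fin_two, hc, hd])
  simpa [Fin.sum_univ_two, hcd, lpNormPair] using h

/-- The dual vector of `(a, b)` attains equality in Hölder's inequality at `(a, b)`, so it gives
a supporting line of `a' ↦ lpNormPair p a' b` at `a`. -/
theorem lpNormPair_add_sub_mul_dualCoord_le (hpq : p.HolderConjugate q) (ha : 0 ≤ a)
    (ha' : 0 ≤ a') (hb : 0 < b) :
    lpNormPair p a b + (a' - a) * dualCoord p a b ≤ lpNormPair p a' b := by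
  rw [dualCoord]
  have hp := hpq.ne_zero
  set N := lpNormPair p a b
  have hN : 0 < N := lpNormPair_pos ha hb
  have hsum : (a / N) ^ p + (b / N) ^ p = 1 := by
    rw [rpow_div_lpNormPair hp ha hb ha, rpow_div_lpNormPair hp ha hb hb.le, ← add_div,
      div_self (lpNormPair_rpow hp ha hb.le ▸ (rpow_pos_of_pos hN p).ne')]
  have hdual : ((a / N) ^ (p - 1)) ^ q + ((b / N) ^ (p - 1)) ^ q = 1 := by
    rwa [← rpow_mul (div_nonneg ha hN.le), ← rpow_mul (div_nonneg hb.le hN.le),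
      hpq.sub_one_mul_conj]
  have hself : ∀ u, 0 ≤ u → u * (u / N) ^ (p - 1) = N * (u / N) ^ p := fun u hu => by
    have hsplit : (u / N) ^ p = u / N * (u / N) ^ (p - 1) := by
      rw [← rpow_one_add' (div_nonneg hu hN.le) (by simpa using hp), add_sub_cancel]
    rw [hsplit]
    field_simp
  have heq : a * (a / N) ^ (p - 1) + b * (b / N) ^ (p - 1) = N := by
    rw [hself a ha, hself b hb.le, ← mul_add, hsum, mul_one]
  have := mul_add_mul_le_lpNormPair hpq ha' hb.le (by positivity) (by positivity) hdual
  linarith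

lemma dualCoord_le_dualCoord (hp : 1 < p) (ha : 0 ≤ a) (haa' : a ≤ a') (hb : 0 < b) :
    dualCoord p a b ≤ dualCoord p a' b := by
  have ha' := ha.trans haa'
  have hp0 : 0 < p := by linarith
  refine rpow_le_rpow (div_nonneg ha (lpNormPair_pos ha hb).le) ?_ (by linarith)
  rw [← rpow_le_rpow_iff (div_nonneg ha (lpNormPair_pos ha hb).le)
    (div_nonneg ha' (lpNormPair_pos ha' hb).le) hp0, rpow_div_lpNormPair hp0.ne' ha hb ha,
    rpow_div_lpNormPair hp0.ne' ha' hb ha', div_le_div_iff₀ (by positivity) (by positivity)]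
  have := mul_le_mul_of_nonneg_right (rpow_le_rpow ha haa' hp0.le) (rpow_pos_of_pos hb p).le
  linarith

end lpNormPair

section incidenceOffset

variable {p v y : ℝ}

lemma rpow_div_one_sub_lt_one (hp : 1 < p) (hv : 1 < v) : v ^ (p / (1 - p)) < 1 :=
  rpow_lt_one_of_one_lt_of_neg hv (div_neg_of_pos_of_neg (by linarith) (by linarith))

lemma incidenceOffset_nonneg (hp : 1 < p) (hv : 1 < v) (hy : 0 ≤ y) :
    0 ≤ incidenceOffset p v y := by
  have := rpow_div_one_sub_lt_one hp hv
  have : 0 < 1 - v ^ (p / (1 - p)) := by linarith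
  unfold incidenceOffset; positivity

theorem dualCoord_incidenceOffset (hp : 1 < p) (hv : 1 < v) (hy : 0 < y) :
    dualCoord p (incidenceOffset p v y) y = v⁻¹ := by
  have hp0 : 0 < p := by linarith
  have hv0 : 0 < v := by linarith
  have hT := incidenceOffset_nonneg hp hv hy.le
  set T := incidenceOffset p v y
  set w := v ^ (p / (1 - p)) with hw
  have hw1 : 0 < 1 - w := by linarith [rpow_div_one_sub_lt_one hp hv]
  have hTp : T ^ p = y ^ p * (w / (1 - w)) := by
    rw [show T = y * v ^ (1 / (1 - p)) * (1 - w) ^ (-1 / p) from rfl,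
      mul_rpow (by positivity) (by positivity), mul_rpow hy.le (by positivity),
      ← rpow_mul hv0.le, ← rpow_mul hw1.le, div_mul_cancel₀ _ hp0.ne', rpow_neg_one,
      show 1 / (1 - p) * p = p / (1 - p) by ring]
    ring
  have hratio : (T / lpNormPair p T y) ^ p = w := by
    rw [rpow_div_lpNormPair hp0.ne' hT hy hT, hTp]
    field_simp
    ring
  rw [dualCoord, show p - 1 = p * ((p - 1) / p) by field_simp,
    rpow_mul (div_nonneg hT (lpNormPair_pos hT hy).le), hratio, hw, ← rpow_mul hv0.le,
    show p / (1 - p) * ((p - 1) / p) = -1 by field_simp [show 1 - p ≠ 0 by linarith]; ring,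
    rpow_neg_one]

end incidenceOffset

theorem stmt_4_general (p v x y : ℝ) (hp : 1 < p) (hv : 1 < v) (hy : 0 < y) :
    let T : ℝ := y * v ^ (1 / (1 - p)) * (1 - v ^ (p / (1 - p))) ^ (-1 / p)
    (x ≤ T → ∀ b ∈ Set.Icc (0:ℝ) x,
        (x ^ p + y ^ p) ^ (1 / p) ≤ b / v + ((x - b) ^ p + y ^ p) ^ (1 / p)) ∧
    (T ≤ x →
        (x - T) / v + (T ^ p + y ^ p) ^ (1 / p) ≤ (x ^ p + y ^ p) ^ (1 / p)) := by
  intro T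
  have hpq := Real.HolderConjugate.conjExponent hp
  have hslope : dualCoord p T y = v⁻¹ := dualCoord_incidenceOffset hp hv hy
  have hT : 0 ≤ T := incidenceOffset_nonneg hp hv hy.le
  refine ⟨fun hxT b ⟨hb0, hbx⟩ => ?_, fun hTx => ?_⟩
  · have hx : 0 ≤ x := hb0.trans hbx
    have hsupp := lpNormPair_add_sub_mul_dualCoord_le hpq hx (sub_nonneg.2 hbx) hy
    have hslope_x : b * dualCoord p x y ≤ b * v⁻¹ :=
      mul_le_mul_of_nonneg_left (hslope ▸ dualCoord_le_dualCoord hp hx hxT hy) hb0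
    change lpNormPair p x y ≤ b / v + lpNormPair p (x - b) y
    rw [div_eq_mul_inv]
    linarith
  · have hsupp := lpNormPair_add_sub_mul_dualCoord_le hpq hT (hT.trans hTx) hy
    rw [hslope] at hsupp
    change (x - T) / v + lpNormPair p T y ≤ lpNormPair p x y
    rw [div_eq_mul_inv]
    linarith

/-- With `T = y · v^(1/(1-p)) · (1 - v^(p/(1-p)))^(-1/p)`:
(a) if `x ≤ T` the direct path beats any highway entry `b ∈ [0,x]`;
(b) if `x ≥ T` the path entering the highway at offset `T` beats the direct path. -/
theorem stmt_4 (p v x y : ℝ) (hp : 1 < p) (hv : 1 < v) (hx : 0 ≤ x) (hy : 0 < y) :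
    let T : ℝ := y * v ^ (1 / (1 - p)) * (1 - v ^ (p / (1 - p))) ^ (-1 / p)
    (x ≤ T → ∀ b ∈ Set.Icc (0:ℝ) x,
        (x ^ p + y ^ p) ^ (1 / p) ≤ b / v + ((x - b) ^ p + y ^ p) ^ (1 / p)) ∧
    (T ≤ x →
        (x - T) / v + (T ^ p + y ^ p) ^ (1 / p) ≤ (x ^ p + y ^ p) ^ (1 / p)) :=
  stmt_4_general p v x y hp hv hy
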